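/- Let f : Λ → Γ be a surjective full map of finite simplicial graphs satisfying condition (*): for each pair of non-adjacent vertices u ≠ u' in Γ and each vertex v ∈ f^{-1}(u), there exists v' ∈ f^{-1}(u') not adjacent to v. Then the map sending each vertex u of Γ to the product of all vertices in f^{-1}(u) extends to an injective group homomorphism φ : A(Γ) → A(Λ). -/

import Mathlib

namespace Paper

variable {V : Type*}

/-- Relators of the right-angled Artin group: commutators of adjacent vertices. -/
def raagRels (G : SimpleGraph V) : Set (FreeGroup V) :=
  {r | ∃ u v : V, G.Adj u v ∧
    r = FreeGroup.of u * FreeGroup.of v * (FreeGroup.of u)⁻¹ * (FreeGroup.of v)⁻¹}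

/-- The right-angled Artin group on a simple graph. -/
def RAAG (G : SimpleGraph V) : Type _ :=
  PresentedGroup (raagRels G)

instance (G : SimpleGraph V) : Group (RAAG G) :=
  inferInstanceAs (Group (PresentedGroup (raagRels G)))

/-- The generator of `RAAG G` corresponding to a vertex. -/
def raagOf (G : SimpleGraph V) (v : V) : RAAG G :=
  PresentedGroup.of v

/-- Evaluation of a word (a list of letters, each a vertex with a sign) in `RAAG G`. -/
def raagWord (G : SimpleGraph V) (w : List (V × Bool)) : RAAG G :=
  (w.map fun p => if p.2 then raagOf G p.1 else (raagOf G p.1)⁻¹).prod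

/-- A word is reduced if any word representing the same element is at least as long. -/
def IsReducedWord (G : SimpleGraph V) (w : List (V × Bool)) : Prop :=
  ∀ w' : List (V × Bool), raagWord G w' = raagWord G w → w.length ≤ w'.length

/-- Word length of an element of `RAAG G` with respect to the vertex generating set. -/
noncomputable def raagLength (G : SimpleGraph V) (g : RAAG G) : ℕ :=
  sInf {n | ∃ w : List (V × Bool), raagWord G w = g ∧ w.length = n}

section Machinery

variable (G : SimpleGraph V)

/-- signed generator -/
def elt (x : V × Bool) : RAAG G := if x.2 then raagOf G x.1 else (raagOf G x.1)⁻¹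

lemma raagWord_nil : raagWord G [] = 1 := rfl

lemma raagWord_cons (x : V × Bool) (t : List (V × Bool)) :
    raagWord G (x :: t) = elt G x * raagWord G t := by
  simp [raagWord, elt]

lemma raagWord_append (a b : List (V × Bool)) :
    raagWord G (a ++ b) = raagWord G a * raagWord G b := by
  simp [raagWord]

lemma raag_commute {u v : V} (h : G.Adj u v) :
    Commute (raagOf G u) (raagOf G v) := by
  have hr : (FreeGroup.of u * FreeGroup.of v * (FreeGroup.of u)⁻¹ * (FreeGroup.of v)⁻¹ : FreeGroup V)
      ∈ Subgroup.normalClosure (raagRels G) :=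
    Subgroup.subset_normalClosure ⟨u, v, h, rfl⟩
  have h1 : (PresentedGroup.mk (raagRels G))
      (FreeGroup.of u * FreeGroup.of v * (FreeGroup.of u)⁻¹ * (FreeGroup.of v)⁻¹) = 1 :=
    (QuotientGroup.eq_one_iff _).mpr hr
  have h2 : raagOf G u * raagOf G v * (raagOf G u)⁻¹ * (raagOf G v)⁻¹ = 1 := by
    simp only [map_mul, map_inv] at h1
    exact h1
  have h3 : raagOf G u * raagOf G v = raagOf G v * raagOf G u := by
    have h4 : raagOf G u * raagOf G v * ((raagOf G u)⁻¹ * (raagOf G v)⁻¹) = 1 := by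
      rw [← mul_assoc]; exact h2
    have h5 := mul_eq_one_iff_eq_inv.mp h4
    rw [h5]; group
  exact h3

lemma elt_commute {x y : V × Bool} (h : G.Adj x.1 y.1) :
    Commute (elt G x) (elt G y) := by
  have h0 : Commute (raagOf G x.1) (raagOf G y.1) := raag_commute G h
  unfold elt
  rcases x with ⟨xv, xb⟩; rcases y with ⟨yv, yb⟩
  cases xb <;> cases yb <;> simp only [Bool.false_eq_true, if_false, if_true] <;>
    [exact h0.inv_left.inv_right; exact h0.inv_left; exact h0.inv_right; exact h0]

lemma elt_inv (v : V) (b : Bool) : elt G (v, !b) = (elt G (v, b))⁻¹ := by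
  cases b <;> simp [elt]


/-- there is a letter `(v, !b)` preceded only by letters commuting with `v` -/
def Cand (v : V) (b : Bool) : List (V × Bool) → Prop
  | [] => False
  | y :: s => y = (v, !b) ∨ (G.Adj v y.1 ∧ Cand v b s)

/-- no cancellation pair -/
def Red : List (V × Bool) → Prop
  | [] => True
  | x :: t => ¬ Cand G x.1 x.2 t ∧ Red t

open scoped Classical in
/-- action of a signed letter on a word -/
noncomputable def act (v : V) (b : Bool) : List (V × Bool) → List (V × Bool)
  | [] => [(v, b)]
  | x :: t => if x = (v, !b) then t
      else if G.Adj v x.1 then x :: act v b t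
      else (v, b) :: x :: t

/-- one swap of adjacent commuting letters -/
inductive Step : List (V × Bool) → List (V × Bool) → Prop
  | swap (a b : List (V × Bool)) (x y : V × Bool) (h : G.Adj x.1 y.1) :
      Step (a ++ x :: y :: b) (a ++ y :: x :: b)

def Sim (w w' : List (V × Bool)) : Prop := Relation.ReflTransGen (Step G) w w'

variable {G}

lemma Step.length {w w'} (h : Step G w w') : w.length = w'.length := by
  cases h with | swap a b x y h => simp

lemma Step.symm' {w w'} (h : Step G w w') : Step G w' w := by
  cases h with | swap a b x y h => exact Step.swap a b y x h.symm

lemma Step.cons {w w'} (z : V × Bool) (h : Step G w w') : Step G (z :: w) (z :: w') := by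
  cases h with | swap a b x y h => exact Step.swap (z :: a) b x y h

lemma Sim.refl (w : List (V × Bool)) : Sim G w w := Relation.ReflTransGen.refl

lemma Sim.trans {a b c} (h1 : Sim G a b) (h2 : Sim G b c) : Sim G a c :=
  Relation.ReflTransGen.trans h1 h2

lemma Sim.single {a b} (h : Step G a b) : Sim G a b := Relation.ReflTransGen.single h

lemma Sim.symm {a b} (h : Sim G a b) : Sim G b a := by
  induction h with
  | refl => exact Sim.refl _
  | tail h1 h2 ih => exact Sim.trans (Sim.single h2.symm') ih

lemma Sim.cons (z : V × Bool) {w w'} (h : Sim G w w') : Sim G (z :: w) (z :: w') := by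
  induction h with
  | refl => exact Sim.refl _
  | tail h1 h2 ih => exact Sim.trans ih (Sim.single (h2.cons z))

lemma Sim.length {w w'} (h : Sim G w w') : w.length = w'.length := by
  induction h with
  | refl => rfl
  | tail h1 h2 ih => rw [ih, h2.length]


open scoped Classical in
lemma act_cons (v : V) (b : Bool) (x : V × Bool) (t : List (V × Bool)) :
    act G v b (x :: t) = if x = (v, !b) then t
      else if G.Adj v x.1 then x :: act G v b t
      else (v, b) :: x :: t := by
  rw [act]

lemma act_cons_target {v b x} (t : List (V × Bool)) (h : x = (v, !b)) :
    act G v b (x :: t) = t := by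
  simp [act_cons, h]

lemma act_cons_adj {v b x} (t : List (V × Bool)) (h1 : x ≠ (v, !b)) (h2 : G.Adj v x.1) :
    act G v b (x :: t) = x :: act G v b t := by
  simp [act_cons, h1, h2]

lemma act_cons_block {v b x} (t : List (V × Bool)) (h1 : x ≠ (v, !b)) (h2 : ¬ G.Adj v x.1) :
    act G v b (x :: t) = (v, b) :: x :: t := by
  simp [act_cons, h1, h2]

lemma act_nil (v : V) (b : Bool) : act G v b [] = [(v, b)] := rfl

/-- inserting a letter with no cancellation partner is a shuffle of prepending it -/
lemma act_of_not_cand {v b} : ∀ {t : List (V × Bool)}, ¬ Cand G v b t →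
    Sim G (act G v b t) ((v, b) :: t)
  | [], _ => by rw [act_nil]; exact Sim.refl _
  | y :: s, h => by
    have h' : y ≠ (v, !b) ∧ ¬ (G.Adj v y.1 ∧ Cand G v b s) := by
      constructor
      · intro hy; exact h (Or.inl hy)
      · intro hy; exact h (Or.inr hy)
    by_cases hadj : G.Adj v y.1
    · have hc : ¬ Cand G v b s := fun hc => h'.2 ⟨hadj, hc⟩
      rw [act_cons_adj s h'.1 hadj]
      refine Sim.trans (Sim.cons y (act_of_not_cand hc)) ?_
      have := Step.swap ([] : List (V × Bool)) s y (v, b) (by simpa using hadj.symm)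
      simpa using Sim.single this
    · rw [act_cons_block s h'.1 hadj]; exact Sim.refl _

lemma cand_act {u v : V} {s b : Bool} (huv : u ≠ v) (hadj : G.Adj v u) :
    ∀ {t : List (V × Bool)}, Cand G u s (act G v b t) → Cand G u s t
  | [], h => by
    rw [act_nil] at h
    rcases h with h | ⟨h1, h2⟩
    · exact absurd (congrArg Prod.fst h).symm huv
    · exact h2.elim
  | y :: r, h => by
    by_cases hy : y = (v, !b)
    · rw [act_cons_target r hy] at h
      exact Or.inr ⟨by rw [hy]; exact hadj.symm, h⟩
    · by_cases hadj' : G.Adj v y.1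
      · rw [act_cons_adj r hy hadj'] at h
        rcases h with h | ⟨h1, h2⟩
        · exact Or.inl h
        · exact Or.inr ⟨h1, cand_act huv hadj h2⟩
      · rw [act_cons_block r hy hadj'] at h
        rcases h with h | ⟨h1, h2⟩
        · exact absurd (congrArg Prod.fst h).symm huv
        · exact h2

lemma red_act {v b} : ∀ {w : List (V × Bool)}, Red G w → Red G (act G v b w)
  | [], _ => by
    rw [act_nil]
    exact ⟨fun h => h.elim, trivial⟩
  | x :: t, ⟨h1, h2⟩ => by
    by_cases hx : x = (v, !b)
    · rw [act_cons_target t hx]; exact h2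
    · by_cases hadj : G.Adj v x.1
      · rw [act_cons_adj t hx hadj]
        have hne : x.1 ≠ v := fun he => G.irrefl (he ▸ hadj)
        exact ⟨fun hc => h1 (cand_act hne hadj hc), red_act h2⟩
      · rw [act_cons_block t hx hadj]
        refine ⟨?_, h1, h2⟩
        rintro (h | ⟨h3, h4⟩)
        · exact hx (by simpa using h)
        · exact hadj h3


lemma step_act (v : V) (b : Bool) :
    ∀ (a : List (V × Bool)) (tl : List (V × Bool)) (x y : V × Bool), G.Adj x.1 y.1 →
      Sim G (act G v b (a ++ x :: y :: tl)) (act G v b (a ++ y :: x :: tl))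
  | [], tl, x, y, hxy => by
    simp only [List.nil_append]
    by_cases hx : x = (v, !b)
    · have hay : G.Adj v y.1 := by rw [hx] at hxy; exact hxy
      have hy : y ≠ (v, !b) := by rintro rfl; exact G.irrefl hay
      rw [act_cons_target _ hx, act_cons_adj _ hy hay, act_cons_target _ hx]
      exact Sim.refl _
    · by_cases hy : y = (v, !b)
      · have hax : G.Adj v x.1 := by rw [hy] at hxy; exact hxy.symm
        rw [act_cons_target _ hy, act_cons_adj _ hx hax, act_cons_target _ hy]
        exact Sim.refl _
      · by_cases hax : G.Adj v x.1 <;> by_cases hay : G.Adj v y.1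
        · rw [act_cons_adj _ hx hax, act_cons_adj _ hy hay, act_cons_adj _ hy hay,
            act_cons_adj _ hx hax]
          exact Sim.single (Step.swap [] _ x y hxy)
        · rw [act_cons_adj _ hx hax, act_cons_block _ hy hay, act_cons_block _ hy hay]
          refine Sim.trans (Sim.single (Step.swap [] _ x (v, b) (by simpa using hax.symm))) ?_
          exact Sim.single (Step.swap [(v, b)] _ x y hxy)
        · rw [act_cons_block _ hx hax, act_cons_adj _ hy hay, act_cons_block _ hx hax]
          refine Sim.trans (Sim.single (Step.swap [(v, b)] _ x y hxy)) ?_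
          exact Sim.single (Step.swap [] _ (v, b) y (by simpa using hay))
        · rw [act_cons_block _ hx hax, act_cons_block _ hy hay]
          exact Sim.single (Step.swap [(v, b)] _ x y hxy)
  | z :: a, tl, x, y, hxy => by
    simp only [List.cons_append]
    by_cases hz : z = (v, !b)
    · rw [act_cons_target _ hz, act_cons_target _ hz]
      exact Sim.single (Step.swap a tl x y hxy)
    · by_cases haz : G.Adj v z.1
      · rw [act_cons_adj _ hz haz, act_cons_adj _ hz haz]
        exact Sim.cons z (step_act v b a tl x y hxy)
      · rw [act_cons_block _ hz haz, act_cons_block _ hz haz]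
        exact Sim.cons _ (Sim.cons _ (Sim.single (Step.swap a tl x y hxy)))

lemma sim_act {v b} {w w'} (h : Sim G w w') : Sim G (act G v b w) (act G v b w') := by
  induction h with
  | refl => exact Sim.refl _
  | tail h1 h2 ih =>
    refine Sim.trans ih ?_
    cases h2 with
    | swap a tl x y hxy => exact step_act v b a tl x y hxy

lemma act_act_inv {v b} : ∀ {w : List (V × Bool)}, Red G w →
    Sim G (act G v b (act G v (!b) w)) w
  | [], _ => by
    rw [act_nil, act_cons_target _ rfl]
    exact Sim.refl _
  | x :: t, ⟨h1, h2⟩ => by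
    by_cases hx : x = (v, b)
    · subst hx
      rw [act_cons_target t (by rw [Bool.not_not])]
      exact act_of_not_cand h1
    · by_cases hx1 : x.1 = v
      · have hxe : x = (v, !b) := by
          rcases x with ⟨x1, x2⟩
          simp only at hx1
          subst hx1
          cases x2 <;> cases b <;> simp_all
        rw [act_cons_block t (by simp only [Bool.not_not]; exact hx)
          (by rw [hx1]; exact fun h => G.irrefl h)]
        rw [act_cons_target _ rfl]
        rw [hxe]
        exact Sim.refl _
      · by_cases hadj : G.Adj v x.1
        · rw [act_cons_adj t (fun he => hx1 (congrArg Prod.fst he)) hadj,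
            act_cons_adj _ (fun he => hx1 (congrArg Prod.fst he)) hadj]
          exact Sim.cons x (act_act_inv h2)
        · rw [act_cons_block t (fun he => hx1 (congrArg Prod.fst he)) hadj,
            act_cons_target _ rfl]
          exact Sim.refl _


lemma act_act_comm {u v : V} {b c : Bool} (huv : G.Adj u v) :
    ∀ (w : List (V × Bool)),
      Sim G (act G u b (act G v c w)) (act G v c (act G u b w))
  | [] => by
    have hvu : v ≠ u := fun he => G.irrefl (he ▸ huv)
    have h1 : (v, c) ≠ (u, !b) := fun he => hvu (congrArg Prod.fst he)
    have h2 : (u, b) ≠ (v, !c) := fun he => huv.ne (congrArg Prod.fst he)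
    rw [act_nil, act_nil, act_cons_adj _ h1 huv, act_cons_adj _ h2 huv.symm, act_nil, act_nil]
    exact Sim.single (Step.swap [] [] (v, c) (u, b) huv.symm)
  | x :: t => by
    have hvu : v ≠ u := fun he => G.irrefl (he ▸ huv)
    have h1 : (v, c) ≠ (u, !b) := fun he => hvu (congrArg Prod.fst he)
    have h2 : (u, b) ≠ (v, !c) := fun he => huv.ne (congrArg Prod.fst he)
    by_cases hxv : x = (v, !c)
    · have hxu : x ≠ (u, !b) := by rw [hxv]; exact fun he => hvu (congrArg Prod.fst he)
      have hadjux : G.Adj u x.1 := by rw [hxv]; exact huv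
      rw [act_cons_target _ hxv, act_cons_adj _ hxu hadjux, act_cons_target _ hxv]
      exact Sim.refl _
    · by_cases hxu : x = (u, !b)
      · have hadjvx : G.Adj v x.1 := by rw [hxu]; exact huv.symm
        rw [act_cons_target _ hxu, act_cons_adj _ hxv hadjvx, act_cons_target _ hxu]
        exact Sim.refl _
      · by_cases hav : G.Adj v x.1 <;> by_cases hau : G.Adj u x.1
        · rw [act_cons_adj _ hxv hav, act_cons_adj _ hxu hau, act_cons_adj _ hxu hau,
            act_cons_adj _ hxv hav]
          exact Sim.cons x (act_act_comm huv t)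
        · rw [act_cons_adj _ hxv hav, act_cons_block _ hxu hau, act_cons_block _ hxu hau,
            act_cons_adj _ h2 huv.symm, act_cons_adj _ hxv hav]
          exact Sim.refl _
        · rw [act_cons_block _ hxv hav, act_cons_adj _ h1 huv, act_cons_adj _ hxu hau,
            act_cons_block _ hxv hav]
          exact Sim.refl _
        · rw [act_cons_block _ hxv hav, act_cons_adj _ h1 huv, act_cons_block _ hxu hau,
            act_cons_adj _ h2 huv.symm, act_cons_block _ hxv hav]
          exact Sim.single (Step.swap [] _ (v, c) (u, b) huv.symm)


variable (G)

def RW : Type _ := {w : List (V × Bool) // Red G w}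

instance rwSetoid : Setoid (RW G) :=
  ⟨fun a b => Sim G a.1 b.1, fun _ => Sim.refl _, Sim.symm, Sim.trans⟩

def Q : Type _ := Quotient (rwSetoid G)

noncomputable def actQ (v : V) (b : Bool) : Q G → Q G :=
  Quotient.map (fun w => ⟨act G v b w.1, red_act w.2⟩) (fun _ _ h => sim_act h)

lemma actQ_mk (v : V) (b : Bool) (w : RW G) :
    actQ G v b ⟦w⟧ = ⟦⟨act G v b w.1, red_act w.2⟩⟧ := rfl

noncomputable def permOf (v : V) : Equiv.Perm (Q G) where
  toFun := actQ G v true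
  invFun := actQ G v false
  left_inv := by
    intro q
    induction q using Quotient.ind with
    | _ w => exact Quotient.sound (act_act_inv (b := false) w.2)
  right_inv := by
    intro q
    induction q using Quotient.ind with
    | _ w => exact Quotient.sound (act_act_inv (b := true) w.2)

lemma permOf_comm {u v : V} (h : G.Adj u v) :
    permOf G u * permOf G v = permOf G v * permOf G u := by
  ext q
  induction q using Quotient.ind with
  | _ w => exact Quotient.sound (act_act_comm h w.1)

noncomputable def rep : RAAG G →* Equiv.Perm (Q G) :=
  PresentedGroup.toGroup (f := permOf G) (by
    rintro r ⟨u, v, huv, rfl⟩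
    simp only [map_mul, map_inv, FreeGroup.lift_apply_of]
    rw [mul_inv_eq_one, mul_inv_eq_iff_eq_mul]
    exact permOf_comm G huv)

lemma rep_of (v : V) : rep G (raagOf G v) = permOf G v :=
  PresentedGroup.toGroup.of _

lemma rep_elt (x : V × Bool) (q : Q G) :
    rep G (elt G x) q = actQ G x.1 x.2 q := by
  rcases x with ⟨v, b⟩
  cases b
  · show rep G (elt G (v, false)) q = actQ G v false q
    rw [show elt G (v, false) = (raagOf G v)⁻¹ from rfl, map_inv, rep_of]
    rfl
  · show rep G (elt G (v, true)) q = actQ G v true q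
    rw [show elt G (v, true) = raagOf G v from rfl, rep_of]
    rfl

def emptyQ : Q G := ⟦⟨[], trivial⟩⟧

lemma eval_red : ∀ {w : List (V × Bool)} (hw : Red G w),
    rep G (raagWord G w) (emptyQ G) = ⟦⟨w, hw⟩⟧
  | [], _ => by rw [raagWord_nil, map_one]; rfl
  | x :: t, ⟨h1, h2⟩ => by
    rw [raagWord_cons, map_mul, Equiv.Perm.mul_apply, rep_elt, eval_red h2]
    refine Quotient.sound ?_
    have := act_of_not_cand (v := x.1) (b := x.2) (t := t) h1
    exact this

lemma red_word_nil {w : List (V × Bool)} (hw : Red G w) (h : raagWord G w = 1) :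
    w = [] := by
  have h1 := eval_red G hw
  rw [h, map_one, Equiv.Perm.one_apply] at h1
  have h2 : Sim G [] w := Quotient.exact h1
  exact List.eq_nil_of_length_eq_zero h2.length.symm


variable {G}

lemma cand_extract {v b} : ∀ {t : List (V × Bool)}, Cand G v b t →
    ∃ c d, t = c ++ (v, !b) :: d ∧ ∀ z ∈ c, G.Adj v z.1
  | y :: s, h => by
    rcases h with h | ⟨h1, h2⟩
    · exact ⟨[], s, by rw [h]; rfl, by simp⟩
    · obtain ⟨c, d, rfl, hc⟩ := cand_extract h2
      exact ⟨y :: c, d, rfl, by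
        intro z hz
        rcases List.mem_cons.mp hz with rfl | hz
        · exact h1
        · exact hc z hz⟩

lemma commute_word {v : V} {b : Bool} {c : List (V × Bool)}
    (h : ∀ z ∈ c, G.Adj v z.1) : Commute (elt G (v, b)) (raagWord G c) := by
  induction c with
  | nil => rw [raagWord_nil]; exact Commute.one_right _
  | cons z s ih =>
    rw [raagWord_cons]
    exact Commute.mul_right (elt_commute G (h z List.mem_cons_self))
      (ih fun z hz => h z (List.mem_cons_of_mem _ hz))

lemma word_cancel {v : V} {b : Bool} {c d : List (V × Bool)}
    (h : ∀ z ∈ c, G.Adj v z.1) :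
    raagWord G ((v, b) :: (c ++ (v, !b) :: d)) = raagWord G (c ++ d) := by
  rw [raagWord_cons, raagWord_append, raagWord_cons, raagWord_append, elt_inv,
    ← mul_assoc, (commute_word h).eq, mul_assoc, mul_inv_cancel_left]

lemma exists_red : ∀ (n : ℕ) (w : List (V × Bool)), w.length ≤ n →
    ∃ w', Red G w' ∧ raagWord G w' = raagWord G w ∧ w'.length ≤ w.length := by
  intro n
  induction n with
  | zero =>
    intro w hw
    rw [List.eq_nil_of_length_eq_zero (Nat.le_zero.mp hw)]
    exact ⟨[], trivial, rfl, le_rfl⟩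
  | succ n ih =>
    intro w hw
    match w with
    | [] => exact ⟨[], trivial, rfl, le_rfl⟩
    | x :: t =>
      have ht : t.length ≤ n := by simpa using Nat.succ_le_succ_iff.mp hw
      obtain ⟨t', hred, hval, hlen⟩ := ih t ht
      by_cases hc : Cand G x.1 x.2 t'
      · obtain ⟨c, d, rfl, hcomm⟩ := cand_extract hc
        have hlen2 : (c ++ d).length ≤ n := by
          have := hlen.trans ht
          simp only [List.length_append, List.length_cons] at this ⊢
          omega
        obtain ⟨w', hr, hv, hl⟩ := ih (c ++ d) hlen2
        refine ⟨w', hr, ?_, ?_⟩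
        · rw [hv, ← word_cancel hcomm]
          have hx : ((x.1, x.2) : V × Bool) = x := rfl
          rw [hx, raagWord_cons, hval, ← raagWord_cons]
        · refine hl.trans ?_
          have := hlen.trans (Nat.le_refl _)
          simp only [List.length_append, List.length_cons] at hlen ⊢
          omega
      · exact ⟨x :: t', ⟨hc, hred⟩, by rw [raagWord_cons, raagWord_cons, hval], by
          simpa using Nat.succ_le_succ hlen⟩

lemma exists_word (g : RAAG G) : ∃ w, raagWord G w = g := by
  obtain ⟨x, rfl⟩ := PresentedGroup.mk_surjective (raagRels G) g
  induction x using FreeGroup.induction_on with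
  | C1 => exact ⟨[], by rw [raagWord_nil, map_one]; rfl⟩
  | of v => exact ⟨[(v, true)], by simp [raagWord, raagOf, PresentedGroup.of]; rfl⟩
  | inv_of v _ =>
    exact ⟨[(v, false)], by simp [raagWord, raagOf, PresentedGroup.of, map_inv]; rfl⟩
  | mul a b iha ihb =>
    obtain ⟨wa, hwa⟩ := iha
    obtain ⟨wb, hwb⟩ := ihb
    exact ⟨wa ++ wb, by rw [raagWord_append, hwa, hwb, map_mul]; rfl⟩

section Power

variable (G) (n : V → ℕ)

def pw : List (V × Bool) → List (V × Bool)
  | [] => []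
  | x :: t => List.replicate (n x.1) x ++ pw t

variable {G n}

lemma cand_replicate {v : V} {b : Bool} (y : V × Bool) :
    ∀ (j : ℕ) {z}, Cand G v b (List.replicate j y ++ z) → y = (v, !b) ∨ Cand G v b z
  | 0, z, h => Or.inr h
  | j + 1, z, h => by
    rw [List.replicate_succ, List.cons_append] at h
    rcases h with h | ⟨_, h2⟩
    · exact Or.inl h
    · exact cand_replicate y j h2

lemma cand_pw (hn : ∀ v, 1 ≤ n v) {v b} :
    ∀ {t : List (V × Bool)}, Cand G v b (pw n t) → Cand G v b t
  | [], h => h.elim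
  | y :: s, h => by
    rw [pw] at h
    obtain ⟨k, hk⟩ : ∃ k, n y.1 = k + 1 := ⟨n y.1 - 1, by have := hn y.1; omega⟩
    rw [hk, List.replicate_succ, List.cons_append] at h
    rcases h with h | ⟨h1, h2⟩
    · exact Or.inl h
    · rcases cand_replicate y k h2 with h | h
      · exact Or.inl h
      · exact Or.inr ⟨h1, cand_pw hn h⟩

lemma red_replicate_aux (x : V × Bool) {z : List (V × Bool)}
    (hz1 : ¬ Cand G x.1 x.2 z) (hz2 : Red G z) :
    ∀ k, Red G (List.replicate k x ++ z)
  | 0 => hz2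
  | k + 1 => by
    rw [List.replicate_succ, List.cons_append]
    refine ⟨?_, red_replicate_aux x hz1 hz2 k⟩
    intro h
    rcases cand_replicate x k h with h | h
    · have := congrArg Prod.snd h
      simp at this
    · exact hz1 h

lemma red_pw (hn : ∀ v, 1 ≤ n v) : ∀ {w : List (V × Bool)}, Red G w → Red G (pw n w)
  | [], _ => trivial
  | x :: t, ⟨h1, h2⟩ => by
    rw [pw]
    exact red_replicate_aux x (fun h => h1 (cand_pw hn h)) (red_pw hn h2) _

lemma pw_nil (hn : ∀ v, 1 ≤ n v) {w : List (V × Bool)} (h : pw n w = []) : w = [] := by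
  cases w with
  | nil => rfl
  | cons x t =>
    rw [pw] at h
    rcases List.append_eq_nil_iff.mp h with ⟨h1, _⟩
    have := congrArg List.length h1
    simp only [List.length_replicate, List.length_nil] at this
    exact absurd this (by have := hn x.1; omega)

lemma raagWord_replicate (k : ℕ) (x : V × Bool) :
    raagWord G (List.replicate k x) = elt G x ^ k := by
  unfold raagWord
  rw [List.map_replicate, List.prod_replicate]
  rfl

end Power

end Machinery

/-- A surjective full map `f : Λ → Γ` of finite simplicial graphs
satisfying condition (*) induces an injective homomorphism `A(Γ) → A(Λ)` sending
each vertex `u` to the product of the vertices in `f⁻¹(u)`. -/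
theorem diagonal_embedding_raag {VΛ VΓ : Type*} [Fintype VΛ] [Fintype VΓ]
    (Λ : SimpleGraph VΛ) (Γ : SimpleGraph VΓ) (f : VΛ → VΓ)
    (hmap : ∀ a b, Λ.Adj a b → Γ.Adj (f a) (f b))
    (hsurj : Function.Surjective f)
    (hfull : ∀ u₁ u₂, Γ.Adj u₁ u₂ → ∀ v₁ v₂, f v₁ = u₁ → f v₂ = u₂ → Λ.Adj v₁ v₂)
    (hstar : ∀ u u', u ≠ u' → ¬ Γ.Adj u u' →
      ∀ v, f v = u → ∃ v', f v' = u' ∧ ¬ Λ.Adj v v') :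
    ∃ φ : RAAG Γ →* RAAG Λ, Function.Injective φ ∧
      ∀ u : VΓ, ∃ l : List VΛ, l.Nodup ∧ (∀ v, v ∈ l ↔ f v = u) ∧
        φ (raagOf Γ u) = (l.map (raagOf Λ)).prod := by
  classical
  set l : VΓ → List VΛ := fun u => (Finset.univ.filter (fun v => f v = u)).toList with hl
  have hmem : ∀ u v, v ∈ l u ↔ f v = u := by intro u v; simp [hl]
  have hnodup : ∀ u, (l u).Nodup := fun u => Finset.nodup_toList _
  have hne : ∀ u, 1 ≤ (l u).length := by
    intro u
    obtain ⟨v, hv⟩ := hsurj u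
    have hvl : v ∈ l u := (hmem u v).mpr hv
    exact List.length_pos_iff.mpr (List.ne_nil_of_mem hvl)
  have hrelφ : ∀ r ∈ raagRels Γ,
      FreeGroup.lift (fun u => ((l u).map (raagOf Λ)).prod) r = 1 := by
    rintro r ⟨u₁, u₂, h12, rfl⟩
    simp only [map_mul, map_inv, FreeGroup.lift_apply_of]
    rw [mul_inv_eq_one, mul_inv_eq_iff_eq_mul]
    refine (Commute.list_prod_right _ _ fun x hx => ?_).eq
    obtain ⟨v₂, hv₂, rfl⟩ := List.mem_map.mp hx
    refine (Commute.list_prod_right _ _ fun y hy => ?_).symm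
    obtain ⟨v₁, hv₁, rfl⟩ := List.mem_map.mp hy
    exact (raag_commute Λ (hfull u₁ u₂ h12 v₁ v₂ ((hmem u₁ v₁).mp hv₁)
      ((hmem u₂ v₂).mp hv₂))).symm
  set φ : RAAG Γ →* RAAG Λ := PresentedGroup.toGroup hrelφ with hφ
  have hφof : ∀ u, φ (raagOf Γ u) = ((l u).map (raagOf Λ)).prod := by
    intro u
    exact PresentedGroup.toGroup.of hrelφ
  have hrelψ : ∀ r ∈ raagRels Λ, FreeGroup.lift (fun v => raagOf Γ (f v)) r = 1 := by
    rintro r ⟨a, b, hab, rfl⟩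
    simp only [map_mul, map_inv, FreeGroup.lift_apply_of]
    rw [mul_inv_eq_one, mul_inv_eq_iff_eq_mul]
    exact (raag_commute Γ (hmap a b hab)).eq
  set ψ : RAAG Λ →* RAAG Γ := PresentedGroup.toGroup hrelψ with hψ
  have hψof : ∀ v, ψ (raagOf Λ v) = raagOf Γ (f v) := by
    intro v
    exact PresentedGroup.toGroup.of hrelψ
  set P : RAAG Γ →* RAAG Γ := ψ.comp φ with hP
  set n : VΓ → ℕ := fun u => (l u).length with hn
  have hPof : ∀ u, P (raagOf Γ u) = raagOf Γ u ^ n u := by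
    intro u
    show ψ (φ (raagOf Γ u)) = _
    rw [hφof, map_list_prod, List.map_map]
    have h1 : (l u).map (⇑ψ ∘ raagOf Λ) = List.replicate (n u) (raagOf Γ u) := by
      rw [show (n u) = (l u).length from rfl, ← List.map_const']
      refine List.map_congr_left fun v hv => ?_
      show ψ (raagOf Λ v) = raagOf Γ u
      rw [hψof, (hmem u v).mp hv]
    rw [h1, List.prod_replicate]
  have hPelt : ∀ x : VΓ × Bool, P (elt Γ x) = raagWord Γ (List.replicate (n x.1) x) := by
    rintro ⟨u, b⟩
    rw [raagWord_replicate]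
    cases b
    · show P ((raagOf Γ u)⁻¹) = _
      rw [map_inv, hPof, ← inv_pow]
      rfl
    · show P (raagOf Γ u) = _
      rw [hPof]
      rfl
  have hPword : ∀ w, P (raagWord Γ w) = raagWord Γ (pw n w) := by
    intro w
    induction w with
    | nil => rw [raagWord_nil, map_one]; rfl
    | cons x t ih => rw [raagWord_cons, map_mul, ih, pw, raagWord_append, hPelt]
  have hPinj : Function.Injective P := by
    rw [injective_iff_map_eq_one]
    intro g hg
    obtain ⟨w₀, hw₀⟩ := exists_word g
    obtain ⟨w, hr, hv, _⟩ := exists_red w₀.length w₀ le_rfl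
    have hgw : raagWord Γ w = g := by rw [hv, hw₀]
    have h1 : raagWord Γ (pw n w) = 1 := by rw [← hPword, hgw, hg]
    have h2 := red_word_nil Γ (red_pw hne hr) h1
    have h3 := pw_nil hne h2
    rw [← hgw, h3, raagWord_nil]
  have hφinj : Function.Injective φ := by
    have hco : ⇑P = ⇑ψ ∘ ⇑φ := rfl
    rw [hco] at hPinj
    exact Function.Injective.of_comp hPinj
  exact ⟨φ, hφinj, fun u => ⟨l u, hnodup u, hmem u, hφof u⟩⟩


end Paper
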